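/- Let s, t ≥ 1, a ∈ [t], and let K, K' be s×s block matrices over F_q whose blocks are r×1 column vectors, with K'(i,j) = 0 whenever i ≠ j (block diagonal). For g ∈ [s], with R_{a,g} = I_{s^{t-a-1}} ⊗ e_g ⊗ I_{s^a}, if K'(i,i) = K(i, g ⊕_s i) for all i ∈ [s], then the ℓ̃ × ℓ̃-block computation blkdiag over i ∈ [s] of (R_{a,i} ⊗ I_r)·Φ_{t,a}(K)·R_{a,g⊕_s i}^T equals Φ_{t-1, t-1}(blkdiag(K(i, g⊕_s i) : i ∈ [s])) — that is, extracting the rows with digit i and columns with digit g⊕_s i from the blow-up of K and stacking diagonally yields the blow-up (at position t-1 with t-1 levels) of the block-diagonal kernel with diagonal entries K(i, g⊕_s i). -/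

import Mathlib

/-!
Selecting with `R_{a,i}` on the left and `R_{a,g+i}ᵀ` on the right evaluates the blow-up at the
digit strings obtained by inserting `i` and `g + i` at position `a`. An entry of a blow-up at two
such strings is `K x y ρ` when the remaining digits agree and `0` otherwise, whatever the position;
at the last position this is the same description for `snoc`, and the block-diagonal shape of `K'`
kills the off-diagonal blocks.
-/

open Matrix

/-- The row-selection matrix `R_{a,g}` (for `t = m+1` levels): it selects the rows of
`[s^t]` (indexed by their base-`s` digit strings) whose `a`-th digit equals `g`. -/
def Rsel {F : Type*} [Field F] {s m : ℕ} (a : Fin (m + 1)) (g : Fin s) :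
    Matrix (Fin m → Fin s) (Fin (m + 1) → Fin s) F :=
  Matrix.of fun f f' => if f' = Fin.insertNth a g f then 1 else 0

/-- `R_{a,g} ⊗ I_r`. -/
def RselKron {F : Type*} [Field F] {s m r : ℕ} (a : Fin (m + 1)) (g : Fin s) :
    Matrix ((Fin m → Fin s) × Fin r) ((Fin (m + 1) → Fin s) × Fin r) F :=
  Matrix.of fun p q => Rsel a g p.1 q.1 * (if p.2 = q.2 then 1 else 0)

/-- The blow-up `Φ_{t,a}(K)` of an `s × s` block matrix `K` whose blocks are
column vectors of length `r`. -/
def blowUpVec {F : Type*} [Field F] {s r : ℕ} {t : ℕ} (a : Fin t)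
    (K : Fin s → Fin s → Fin r → F) :
    Matrix ((Fin t → Fin s) × Fin r) (Fin t → Fin s) F :=
  Matrix.of fun p q =>
    if ∀ z, z ≠ a → p.1 z = q z then K (p.1 a) (q a) p.2 else 0

theorem Fin.forall_ne_insertNth_eq_iff {α : Type*} {m : ℕ} (a : Fin (m + 1)) (x y : α)
    (f f' : Fin m → α) :
    (∀ z, z ≠ a →
      Fin.insertNth (α := fun _ => α) a x f z = Fin.insertNth (α := fun _ => α) a y f' z) ↔
        f = f' := by
  constructor
  · intro h
    funext w
    simpa using h (a.succAbove w) (Fin.succAbove_ne a w)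
  · rintro rfl z hz
    obtain ⟨w, rfl⟩ := Fin.exists_succAbove_eq hz
    simp

section BlowUp

variable {F : Type*} [Field F] {s r m : ℕ}

theorem RselKron_mul_apply (a : Fin (m + 1)) (g : Fin s) {ι : Type*}
    (M : Matrix ((Fin (m + 1) → Fin s) × Fin r) ι F) (f : Fin m → Fin s) (ρ : Fin r)
    (j : ι) :
    (RselKron (F := F) (r := r) a g * M) (f, ρ) j = M (Fin.insertNth a g f, ρ) j := by
  simp [Matrix.mul_apply, Fintype.sum_prod_type, RselKron, Rsel]

theorem mul_Rsel_transpose_apply (a : Fin (m + 1)) (g : Fin s) {ι : Type*}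
    (M : Matrix ι (Fin (m + 1) → Fin s) F) (i : ι) (f : Fin m → Fin s) :
    (M * (Rsel (F := F) a g)ᵀ) i f = M i (Fin.insertNth a g f) := by
  simp [Matrix.mul_apply, Rsel]

theorem blowUpVec_insertNth (a : Fin (m + 1)) (K : Fin s → Fin s → Fin r → F) (x y : Fin s)
    (f f' : Fin m → Fin s) (ρ : Fin r) :
    blowUpVec a K (Fin.insertNth a x f, ρ) (Fin.insertNth a y f') =
      if f = f' then K x y ρ else 0 := by
  simp only [blowUpVec, Matrix.of_apply, Fin.forall_ne_insertNth_eq_iff,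
    Fin.insertNth_apply_same]

theorem blowUpVec_snoc (K : Fin s → Fin s → Fin r → F) (x y : Fin s) (f f' : Fin m → Fin s)
    (ρ : Fin r) :
    blowUpVec (Fin.last m) K (Fin.snoc f x, ρ) (Fin.snoc f' y) =
      if f = f' then K x y ρ else 0 := by
  simpa only [Fin.insertNth_last'] using blowUpVec_insertNth (Fin.last m) K x y f f' ρ

end BlowUp

/-- Rows `(i, (f, ρ))` and columns `(i', f')` of the block-diagonal stacking correspond to the
digit strings `snoc f i` and `snoc f' i'`. -/
theorem stmt19_general {F : Type*} [Field F] {s r m : ℕ}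
    (a : Fin (m + 1)) (g : Fin s)
    (K K' : Fin s → Fin s → Fin r → F)
    (hdiag : ∀ i j, i ≠ j → K' i j = 0)
    (hK' : ∀ i, K' i i = K i (g + i)) :
    ∀ (i i' : Fin s) (f f' : Fin m → Fin s) (ρ : Fin r),
      (if i = i' then
          (((RselKron a i * blowUpVec a K : Matrix ((Fin m → Fin s) × Fin r) (Fin (m + 1) → Fin s) F) * (Rsel (F := F) a (g + i))ᵀ :
            Matrix ((Fin m → Fin s) × Fin r) (Fin m → Fin s) F)) (f, ρ) f'
        else 0) =
      blowUpVec (Fin.last m) K' (Fin.snoc f i, ρ) (Fin.snoc f' i') := by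
  intro i i' f f' ρ
  rw [blowUpVec_snoc]
  rcases eq_or_ne i i' with rfl | hne
  · rw [if_pos rfl, hK', ← blowUpVec_insertNth]
    -- the type ascriptions above elaborate `*` through the `CStarMatrix` instance, so the
    -- lemmas are applied up to defeq rather than rewritten
    exact (mul_Rsel_transpose_apply _ _ _ _ _).trans (RselKron_mul_apply _ _ _ _ _ _)
  · simp [hne, hdiag i i' hne]

/-- Entrywise: the block-diagonal stacking (over `i ∈ [s]`) of the matrices
`(R_{a,i} ⊗ I_r)·Φ_{t,a}(K)·R_{a,g⊕_s i}ᵀ` coincides with the blow-up, at the last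
digit position of `t` levels, of the block-diagonal kernel `K'` whose diagonal blocks
are `K' i i = K i (g ⊕_s i)`.  Rows `(i, (f, ρ))` and columns `(i', f')` of the stacked
matrix correspond to the digit strings `snoc f i` and `snoc f' i'`. -/
theorem stmt19 {F : Type*} [Field F] {s r m : ℕ} (hs : 0 < s)
    (a : Fin (m + 1)) (g : Fin s)
    (K K' : Fin s → Fin s → Fin r → F)
    (hdiag : ∀ i j, i ≠ j → K' i j = 0)
    (hK' : ∀ i, K' i i = K i (g + i)) :
    ∀ (i i' : Fin s) (f f' : Fin m → Fin s) (ρ : Fin r),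
      (if i = i' then
          (((RselKron a i * blowUpVec a K : Matrix ((Fin m → Fin s) × Fin r) (Fin (m + 1) → Fin s) F) * (Rsel (F := F) a (g + i))ᵀ :
            Matrix ((Fin m → Fin s) × Fin r) (Fin m → Fin s) F)) (f, ρ) f'
        else 0) =
      blowUpVec (Fin.last m) K' (Fin.snoc f i, ρ) (Fin.snoc f' i') :=
  stmt19_general a g K K' hdiag hK'
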